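/- (Corollary: O(log T / T) without burn-in) Under the hypotheses of the main theorem, if samples are collected from the very beginning (τ = 0), then d_v(P_T^{(0)} − π) ≤ (λ + τ*(T))/T = O(log(T)/T) for all T ≥ T* + τ*(T*). -/

import Mathlib

open Finset

/-- Joint states of `N` binary variables. -/
abbrev GState (N : ℕ) := Fin N → Bool

/-- Full conditional probability π(Xᵢ = b | x₋ᵢ) for a target distribution π. -/
noncomputable def condProb {N : ℕ} (π : GState N → ℝ) (i : Fin N) (x : GState N)
    (b : Bool) : ℝ :=
  π (Function.update x i b) / (π (Function.update x i true) + π (Function.update x i false))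

/-- Variable updated at step `t ≥ 1` of a fixed systematic scan (step kN + i with
1 ≤ i ≤ N updates the i-th variable, i.e. index i − 1). -/
def scanVar (N : ℕ) (hN : 0 < N) (t : ℕ) : Fin N := ⟨(t - 1) % N, Nat.mod_lt _ hN⟩

/-- A herded Gibbs trajectory on a fully connected graph of `N` binary variables with
target `π`: one weight per variable `i` and per assignment of all the other variables
(weights are indexed by full states but only the off-`i` coordinates matter); at step
`t+1` the scanned variable emits 𝟙[w > 0] and only its active weight is updated. -/
structure HerdedGibbs (N : ℕ) (hN : 0 < N) (π : GState N → ℝ) where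
  X : ℕ → GState N
  W : ℕ → Fin N → GState N → ℝ
  init_support : 0 < π (X 0)
  init_w : ∀ i x, condProb π i x true - 1 < W 0 i x ∧ W 0 i x ≤ condProb π i x true
  step_other : ∀ t j, j ≠ scanVar N hN (t + 1) → X (t + 1) j = X t j
  step_cur : ∀ t, X (t + 1) (scanVar N hN (t + 1))
      = decide (0 < W t (scanVar N hN (t + 1)) (X t))
  w_active : ∀ t x, (∀ j, j ≠ scanVar N hN (t + 1) → x j = X t j) →
      W (t + 1) (scanVar N hN (t + 1)) x
        = W t (scanVar N hN (t + 1)) x + condProb π (scanVar N hN (t + 1)) x true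
          - (if X (t + 1) (scanVar N hN (t + 1)) = true then 1 else 0)
  w_frozen : ∀ t i x, ¬(i = scanVar N hN (t + 1) ∧ ∀ j, j ≠ i → x j = X t j) →
      W (t + 1) i x = W t i x

/-- Transition matrix 𝒯ᵢ of regular Gibbs updating variable `i`. -/
noncomputable def stepKernel {N : ℕ} (π : GState N → ℝ) (i : Fin N) :
    Matrix (GState N) (GState N) ℝ :=
  fun x y => if ∀ j, j ≠ i → x j = y j then condProb π i x (y i) else 0

/-- Full-sweep Gibbs transition kernel 𝒯 = 𝒯₁𝒯₂⋯𝒯_N. -/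
noncomputable def sweepKernel {N : ℕ} (π : GState N → ℝ) :
    Matrix (GState N) (GState N) ℝ :=
  (List.ofFn fun i : Fin N => stepKernel π i).prod

/-- Total variation distance d_v(μ − ν) = ‖μ − ν‖₁ / 2 on a finite state space. -/
noncomputable def tvDist {α : Type*} [Fintype α] (μ ν : α → ℝ) : ℝ :=
  (∑ x, |μ x - ν x|) / 2

/-- Dobrushin ergodic coefficient of a transition matrix. -/
noncomputable def dobrushin {α : Type*} [Fintype α] (K : Matrix α α ℝ) : ℝ :=
  ⨆ x, ⨆ x', tvDist (K x) (K x')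

/-- Empirical distribution of `T` end-of-sweep samples starting at sweep `τ`. -/
noncomputable def empDist {N : ℕ} (X : ℕ → GState N) (τ T : ℕ) : GState N → ℝ :=
  fun x => (((Finset.Ico τ (τ + T)).filter fun k => X (k * N) = x).card : ℝ) / T

/-- N_num: number of occurrences of the joint state (x₋ᵢ, b) at substep `i` of sweeps
τ, …, τ+T−1. -/
def empNum {N : ℕ} (hN : 0 < N) (X : ℕ → GState N) (τ T i : ℕ) (x : GState N)
    (b : Bool) : ℕ :=
  ((Finset.Ico τ (τ + T)).filter fun k =>
    (∀ j, j ≠ scanVar N hN i → X (k * N + i) j = x j)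
      ∧ X (k * N + i) (scanVar N hN i) = b).card

/-- N_den: number of occurrences of the conditioning state x₋ᵢ at substep `i − 1`. -/
def empDen {N : ℕ} (hN : 0 < N) (X : ℕ → GState N) (τ T i : ℕ) (x : GState N) : ℕ :=
  ((Finset.Ico τ (τ + T)).filter fun k =>
    ∀ j, j ≠ scanVar N hN i → X (k * N + i - 1) j = x j).card

/-- Empirical herded Gibbs single-step transition kernel T̃⁽ᵗ⁾_{T,i}; entries with an
unvisited conditioning state are set to the regular Gibbs kernel. -/
noncomputable def empStepKernel {N : ℕ} (hN : 0 < N) (π : GState N → ℝ)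
    (X : ℕ → GState N) (τ T i : ℕ) : Matrix (GState N) (GState N) ℝ :=
  fun x y => if ∀ j, j ≠ scanVar N hN i → x j = y j then
      (if empDen hN X τ T i x = 0 then condProb π (scanVar N hN i) x (y (scanVar N hN i))
       else (empNum hN X τ T i x (y (scanVar N hN i)) : ℝ) / (empDen hN X τ T i x : ℝ))
    else 0

/-- Empirical full-sweep herded Gibbs kernel T̃⁽ᵗ⁾_T = T̃⁽ᵗ⁾_{T,1}⋯T̃⁽ᵗ⁾_{T,N}. -/
noncomputable def empSweepKernel {N : ℕ} (hN : 0 < N) (π : GState N → ℝ)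
    (X : ℕ → GState N) (τ T : ℕ) : Matrix (GState N) (GState N) ℝ :=
  (List.ofFn fun i : Fin N => empStepKernel hN π X τ T (i + 1)).prod

/-!
Let `c` count the end-of-sweep states of sweeps `0, …, T - 1`. Every herding weight stays in a
window of length less than `2`, so the empirical conditional frequencies of each variable track the
Gibbs conditionals up to an additive error `2` in the counts, uniformly in `T`; chaining the `N` substeps of a sweep, `c` is invariant under the
sweep kernel `𝒯` up to a total variation error `N · 2^N + 1` independent of `T`. As `π` is
`𝒯`-stationary and `𝒯` contracts total variation by its Dobrushin coefficient `η < 1`, the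
empirical distribution `c / T` is within `(N · 2^N + 1) / ((1 - η) T)` of `π`, and this `O(1/T)`
rate is dominated by `τ*(T) / T` past the threshold.
-/

open Matrix

section TotalVariation

variable {α : Type*} [Fintype α]

lemma tvDist_nonneg (μ ν : α → ℝ) : 0 ≤ tvDist μ ν := by
  unfold tvDist
  positivity

lemma tvDist_triangle (μ ν ρ : α → ℝ) : tvDist μ ρ ≤ tvDist μ ν + tvDist ν ρ := by
  unfold tvDist
  rw [← add_div, ← sum_add_distrib]
  gcongr with x
  exact abs_sub_le _ _ _

lemma tvDist_smul (a : ℝ) (μ ν : α → ℝ) : tvDist (a • μ) (a • ν) = |a| * tvDist μ ν := by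
  simp only [tvDist, Pi.smul_apply, smul_eq_mul, ← mul_sub, abs_mul, ← mul_sum, mul_div_assoc]

lemma tvDist_le_dobrushin (K : Matrix α α ℝ) (x x' : α) : tvDist (K x) (K x') ≤ dobrushin K :=
  (le_ciSup (Set.finite_range _).bddAbove x').trans
    (le_ciSup (f := fun z => ⨆ y, tvDist (K z) (K y)) (Set.finite_range _).bddAbove x)

lemma dobrushin_nonneg (K : Matrix α α ℝ) : 0 ≤ dobrushin K :=
  Real.iSup_nonneg fun _ => Real.iSup_nonneg fun _ => tvDist_nonneg _ _

/-- Since `ζ` has total mass zero, `f` may be recentred at the midpoint of its range. -/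
lemma abs_sum_mul_le_of_sum_eq_zero {ζ f : α → ℝ} {c : ℝ} (hζ : ∑ x, ζ x = 0)
    (hf : ∀ x x', |f x - f x'| ≤ 2 * c) : |∑ x, ζ x * f x| ≤ c * ∑ x, |ζ x| := by
  cases isEmpty_or_nonempty α
  · simp
  obtain ⟨xM, hxM⟩ := Finite.exists_max f
  obtain ⟨xm, hxm⟩ := Finite.exists_min f
  set m := (f xM + f xm) / 2 with hm
  have hmid : ∀ x, |f x - m| ≤ c := fun x => by
    have := abs_le.mp (hf xM xm)
    exact abs_le.mpr ⟨by linarith [hxm x], by linarith [hxM x]⟩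
  calc |∑ x, ζ x * f x| = |∑ x, ζ x * (f x - m)| := by
        simp only [mul_sub, sum_sub_distrib, ← sum_mul, hζ, zero_mul, sub_zero]
    _ ≤ ∑ x, |ζ x| * c := by
        refine (abs_sum_le_sum_abs _ _).trans (sum_le_sum fun x _ => ?_)
        rw [abs_mul]
        exact mul_le_mul_of_nonneg_left (hmid x) (abs_nonneg _)
    _ = c * ∑ x, |ζ x| := by rw [← sum_mul, mul_comm]

lemma tvDist_vecMul_le_dobrushin_mul (K : Matrix α α ℝ) {μ ν : α → ℝ}
    (h : ∑ x, μ x = ∑ x, ν x) : tvDist (μ ᵥ* K) (ν ᵥ* K) ≤ dobrushin K * tvDist μ ν := by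
  set ζ := μ - ν
  have hζ : ∑ x, ζ x = 0 := by simp [ζ, sum_sub_distrib, h]
  -- pairing with the sign vector `s` of `ζ ᵥ* K` gives its ℓ¹ norm as `ζ ⬝ᵥ (K *ᵥ s)`, and the
  -- entries of `K *ᵥ s` spread by at most `2 * dobrushin K`
  set s : α → ℝ := fun y => if 0 ≤ (ζ ᵥ* K) y then 1 else -1
  have hs : ∀ y, |(ζ ᵥ* K) y| = (ζ ᵥ* K) y * s y := fun y => by
    by_cases hy : 0 ≤ (ζ ᵥ* K) y
    · simp [s, hy, abs_of_nonneg hy]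
    · simp [s, hy, abs_of_neg (not_le.mp hy)]
  have hrow : ∀ x x', |(K *ᵥ s) x - (K *ᵥ s) x'| ≤ 2 * dobrushin K := fun x x' => by
    calc |(K *ᵥ s) x - (K *ᵥ s) x'| = |∑ y, (K x y - K x' y) * s y| := by
          simp only [mulVec, dotProduct, sub_mul, sum_sub_distrib]
      _ ≤ ∑ y, |K x y - K x' y| := by
          refine (abs_sum_le_sum_abs _ _).trans (sum_le_sum fun y _ => ?_)
          rw [abs_mul]
          refine mul_le_of_le_one_right (abs_nonneg _) ?_
          by_cases hy : 0 ≤ (ζ ᵥ* K) y <;> simp [s, hy]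
      _ ≤ 2 * dobrushin K := by
          have := tvDist_le_dobrushin K x x'
          unfold tvDist at this
          linarith
  have key : ∑ y, |(ζ ᵥ* K) y| = ∑ x, ζ x * (K *ᵥ s) x := by
    simp only [hs]
    exact (dotProduct_mulVec ζ K s).symm
  unfold tvDist
  simp only [← Pi.sub_apply μ ν, ← Pi.sub_apply (μ ᵥ* K), ← sub_vecMul]
  rw [key, mul_div_assoc']
  gcongr
  exact (le_abs_self _).trans (abs_sum_mul_le_of_sum_eq_zero hζ hrow)

lemma tvDist_vecMul_le {K : Matrix α α ℝ} (hK0 : ∀ x y, 0 ≤ K x y) (hK1 : ∀ x, ∑ y, K x y ≤ 1)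
    (μ ν : α → ℝ) : tvDist (μ ᵥ* K) (ν ᵥ* K) ≤ tvDist μ ν := by
  unfold tvDist
  simp only [← Pi.sub_apply μ ν, ← Pi.sub_apply (μ ᵥ* K), ← sub_vecMul]
  gcongr ?_ / 2
  calc ∑ y, |((μ - ν) ᵥ* K) y| ≤ ∑ y, ∑ x, |(μ - ν) x| * K x y := by
        refine sum_le_sum fun y _ => (abs_sum_le_sum_abs _ _).trans (le_of_eq ?_)
        simp only [abs_mul, abs_of_nonneg (hK0 _ y)]
    _ = ∑ x, |(μ - ν) x| * ∑ y, K x y := by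
        rw [sum_comm]
        simp only [mul_sum]
    _ ≤ ∑ x, |(μ - ν) x| := sum_le_sum fun x _ => mul_le_of_le_one_right (abs_nonneg _) (hK1 x)

lemma tvDist_le_of_vecMul_eq_self {K : Matrix α α ℝ} (hK : dobrushin K < 1) {μ π : α → ℝ}
    (hπ : π ᵥ* K = π) (h : ∑ x, μ x = ∑ x, π x) :
    tvDist μ π ≤ tvDist μ (μ ᵥ* K) / (1 - dobrushin K) := by
  rw [le_div_iff₀ (by linarith)]
  have hcontr := tvDist_vecMul_le_dobrushin_mul K h
  rw [hπ] at hcontr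
  linarith [tvDist_triangle μ (μ ᵥ* K) π]

lemma tvDist_vecMul_prod_ofFn_le [DecidableEq α] {n : ℕ} {K : Fin n → Matrix α α ℝ}
    (hK0 : ∀ j x y, 0 ≤ K j x y) (hK1 : ∀ j x, ∑ y, K j x y ≤ 1) (μ : ℕ → α → ℝ) {ε : ℝ}
    (hμ : ∀ j : Fin n, tvDist (μ (j + 1)) (μ j ᵥ* K j) ≤ ε) :
    tvDist (μ n) (μ 0 ᵥ* (List.ofFn K).prod) ≤ n * ε := by
  induction n with
  | zero => simp [tvDist]
  | succ n ih =>
    have ih' := ih (fun j => hK0 j.castSucc) (fun j => hK1 j.castSucc) (fun j => hμ j.castSucc)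
    rw [List.ofFn_succ', List.prod_concat, ← vecMul_vecMul]
    calc tvDist (μ (n + 1)) (μ 0 ᵥ* (List.ofFn fun j => K j.castSucc).prod ᵥ* K (Fin.last n))
        ≤ tvDist (μ (n + 1)) (μ n ᵥ* K (Fin.last n))
          + tvDist (μ n ᵥ* K (Fin.last n))
              (μ 0 ᵥ* (List.ofFn fun j => K j.castSucc).prod ᵥ* K (Fin.last n)) :=
          tvDist_triangle _ _ _
      _ ≤ ε + n * ε := add_le_add (by simpa using hμ (Fin.last n))
          ((tvDist_vecMul_le (hK0 _) (hK1 _) _ _).trans ih')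
      _ = (n + 1 : ℕ) * ε := by push_cast; ring

end TotalVariation

section GibbsKernel

open Function

variable {N : ℕ}

lemma eq_update_of_agreeOff {j : Fin N} {x y : GState N} (h : ∀ i, i ≠ j → x i = y i) :
    x = update y j (x j) :=
  (update_eq_iff.mpr ⟨rfl, fun i hi => (h i hi).symm⟩).symm

lemma sum_eq_sum_update_of_agreeOff {f : GState N → ℝ} (j : Fin N) (y : GState N)
    (hf : ∀ x, ¬ (∀ i, i ≠ j → x i = y i) → f x = 0) :
    ∑ x, f x = ∑ b, f (update y j b) := by
  rw [Fintype.sum_bool]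
  refine Fintype.sum_eq_add _ _ (fun h => by simpa using congrFun h j) fun x hx => hf x ?_
  intro hagree
  rw [eq_update_of_agreeOff hagree] at hx
  cases h : x j <;> simp [h] at hx

variable (π : GState N → ℝ)

lemma condProb_update (j : Fin N) (x : GState N) (c b : Bool) :
    condProb π j (update x j c) b = condProb π j x b := by
  simp only [condProb, update_idem]

lemma condProb_congr {j : Fin N} {x y : GState N} (h : ∀ i, i ≠ j → x i = y i) (b : Bool) :
    condProb π j x b = condProb π j y b := by
  rw [eq_update_of_agreeOff h, condProb_update]

variable {π} (hπ0 : ∀ x, 0 ≤ π x)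
include hπ0

lemma condProb_nonneg (j : Fin N) (x : GState N) (b : Bool) : 0 ≤ condProb π j x b :=
  div_nonneg (hπ0 _) (add_nonneg (hπ0 _) (hπ0 _))

lemma le_add_update (j : Fin N) (x : GState N) :
    π x ≤ π (update x j true) + π (update x j false) := by
  conv_lhs => rw [← update_eq_self j x]
  cases x j
  · linarith [hπ0 (update x j true)]
  · linarith [hπ0 (update x j false)]

lemma condProb_true_add_false {j : Fin N} {x : GState N} (hx : 0 < π x) :
    condProb π j x true + condProb π j x false = 1 := by
  rw [condProb, condProb, ← add_div, div_self (hx.trans_le (le_add_update hπ0 j x)).ne']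

lemma sum_condProb_le_one (j : Fin N) (x : GState N) : ∑ b, condProb π j x b ≤ 1 := by
  rw [Fintype.sum_bool, condProb, condProb, ← add_div]
  exact div_le_one_of_le₀ le_rfl (add_nonneg (hπ0 _) (hπ0 _))

lemma condProb_le_one (j : Fin N) (x : GState N) (b : Bool) : condProb π j x b ≤ 1 :=
  (single_le_sum (fun c _ => condProb_nonneg hπ0 j x c) (mem_univ b)).trans
    (sum_condProb_le_one hπ0 j x)

lemma stepKernel_nonneg (j : Fin N) (x y : GState N) : 0 ≤ stepKernel π j x y := by
  unfold stepKernel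
  split_ifs
  exacts [condProb_nonneg hπ0 j x _, le_rfl]

lemma sum_stepKernel_le_one (j : Fin N) (x : GState N) : ∑ y, stepKernel π j x y ≤ 1 := by
  rw [sum_eq_sum_update_of_agreeOff (f := stepKernel π j x) j x fun y hy =>
    if_neg fun h => hy fun i hi => (h i hi).symm]
  refine le_of_eq_of_le (sum_congr rfl fun b _ => ?_) (sum_condProb_le_one hπ0 j x)
  rw [stepKernel, if_pos fun i hi => (update_of_ne hi _ _).symm, update_self]

lemma vecMul_stepKernel (j : Fin N) : π ᵥ* stepKernel π j = π := by
  funext y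
  have hmass := le_add_update hπ0 j y
  calc (π ᵥ* stepKernel π j) y
      = (π (update y j true) + π (update y j false)) * condProb π j y (y j) := by
        rw [vecMul, dotProduct, sum_eq_sum_update_of_agreeOff j y fun x hx => by
          simp [stepKernel, hx], Fintype.sum_bool, add_mul]
        congr 1 <;>
        rw [stepKernel, if_pos fun i hi => update_of_ne hi _ _, condProb_update]
    _ = π y := by
        rw [condProb, update_eq_self]
        rcases (hπ0 y).trans hmass |>.eq_or_lt with h | h
        · rw [← h, zero_mul]
          exact (le_antisymm (h ▸ hmass) (hπ0 y)).symm
        · exact mul_div_cancel₀ _ h.ne'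

lemma vecMul_sweepKernel : π ᵥ* sweepKernel π = π :=
  List.prod_induction (fun K => π ᵥ* K = π)
    (fun A B hA hB => by rw [← vecMul_vecMul, hA, hB]) (vecMul_one π)
    (by simpa using vecMul_stepKernel hπ0)

end GibbsKernel

section Herding

variable {p m M : ℝ}

lemma herding_step_mem (hp0 : 0 ≤ p) (hp1 : p ≤ 1) {θ w : ℝ} (hθ : θ ∈ Set.Icc m M)
    (hw : w ∈ Set.Ioc (p - 1 + m) (p + M)) :
    w + (p - if θ < w then 1 else 0) ∈ Set.Ioc (p - 1 + m) (p + M) := by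
  obtain ⟨hθm, hθM⟩ := hθ
  obtain ⟨hwl, hwu⟩ := hw
  split_ifs with h
  · constructor <;> linarith
  · constructor <;> linarith [not_lt.mp h]

variable {A E : ℕ → Prop} [DecidablePred A] [DecidablePred E] {u : ℕ → ℝ}

lemma card_filter_sub_mul_card_filter_eq
    (hu : ∀ k, u (k + 1) = u k + if A k then p - (if E k then 1 else 0) else 0) (T : ℕ) :
    (#{k ∈ range T | A k ∧ E k} : ℝ) - p * #{k ∈ range T | A k} = u 0 - u T := by
  rw [natCast_card_filter, natCast_card_filter, mul_sum, ← sum_sub_distrib, ← neg_sub,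
    ← sum_range_sub, ← sum_neg_distrib]
  refine sum_congr rfl fun k _ => ?_
  rw [hu]
  split_ifs <;> simp_all

/-- The herding property: the weight `u` stays in a window of length `1 + (M - m)`, and the
count discrepancy telescopes to a difference of two values of `u`. -/
lemma abs_card_filter_sub_mul_card_filter_le (hp0 : 0 ≤ p) (hp1 : p ≤ 1) (hm : m ≤ 0)
    (hM : 0 ≤ M) {θ : ℕ → ℝ} (hθ : ∀ k, θ k ∈ Set.Icc m M) (hE : ∀ k, A k → (E k ↔ θ k < u k))
    (hu0 : u 0 ∈ Set.Ioc (p - 1) p)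
    (hu : ∀ k, u (k + 1) = u k + if A k then p - (if E k then 1 else 0) else 0) (T : ℕ) :
    |(#{k ∈ range T | A k ∧ E k} : ℝ) - p * #{k ∈ range T | A k}| ≤ 1 + (M - m) := by
  have hwindow : ∀ k, u k ∈ Set.Ioc (p - 1 + m) (p + M) := by
    intro k
    induction k with
    | zero => exact ⟨by linarith [hu0.1], by linarith [hu0.2]⟩
    | succ k ih =>
      by_cases hA : A k
      · simp only [hu k, if_pos hA, hE k hA]
        exact herding_step_mem hp0 hp1 (hθ k) ih
      · simpa [hu k, hA] using ih
  rw [card_filter_sub_mul_card_filter_eq hu, abs_le]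
  obtain ⟨h0l, h0u⟩ := hwindow 0
  obtain ⟨hTl, hTu⟩ := hwindow T
  constructor <;> linarith

end Herding

section Scan

variable {N : ℕ} (hN : 0 < N)

lemma scanVar_mul_add_succ (k : ℕ) (j : Fin N) : scanVar N hN (k * N + j + 1) = j :=
  Fin.ext (by simp [scanVar, Nat.mod_eq_of_lt j.isLt])

lemma scanVar_succ (j : Fin N) : scanVar N hN (j + 1) = j := by
  simpa using scanVar_mul_add_succ hN 0 j

lemma scanVar_ne_of_pos_of_le {j : Fin N} {u : ℕ} (hu : 0 < u) (hj : u ≤ j) :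
    scanVar N hN u ≠ j := fun h => by
    have := congrArg Fin.val h
    simp only [scanVar] at this
    rw [Nat.mod_eq_of_lt (by omega)] at this
    omega

lemma scanVar_ne_of_mem_Ioc {k : ℕ} {j : Fin N} {u : ℕ} (hu : k * N + j + 1 < u)
    (hu' : u ≤ (k + 1) * N + j) : scanVar N hN u ≠ j := fun h => by
  have hval := congrArg Fin.val h
  obtain ⟨r, rfl⟩ : ∃ r, u = k * N + j + 1 + r := ⟨u - (k * N + j + 1), by omega⟩
  simp only [scanVar, show k * N + j + 1 + r - 1 = (j + r) + k * N by ring_nf; omega,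
    Nat.add_mul_mod_self_right] at hval
  have hr : r < N := by nlinarith
  rcases lt_or_ge (j + r) N with hlt | hge
  · rw [Nat.mod_eq_of_lt hlt] at hval
    omega
  · rw [Nat.mod_eq_sub_mod hge, Nat.mod_eq_of_lt (by omega)] at hval
    omega

lemma empDen_eq (X : ℕ → GState N) (T : ℕ) (j : Fin N) (x : GState N) :
    empDen hN X 0 T (j + 1) x = #{k ∈ range T | ∀ i, i ≠ j → X (k * N + j) i = x i} := by
  simp only [empDen, zero_add, scanVar_succ, range_eq_Ico, ← add_assoc, Nat.add_sub_cancel]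

end Scan

def visitCount {N : ℕ} (X : ℕ → GState N) (T j : ℕ) (y : GState N) : ℝ :=
  ∑ k ∈ range T, if X (k * N + j) = y then 1 else 0

section VisitCount

variable {N : ℕ} (X : ℕ → GState N) (T : ℕ)

lemma sum_visitCount (j : ℕ) : ∑ y, visitCount X T j y = T := by
  simp only [visitCount]
  rw [sum_comm]
  simp

lemma vecMul_visitCount_apply (j : ℕ) (K : Matrix (GState N) (GState N) ℝ) (y : GState N) :
    (visitCount X T j ᵥ* K) y = ∑ k ∈ range T, K (X (k * N + j)) y := by
  simp only [vecMul, dotProduct, visitCount, sum_mul, ite_mul, one_mul, zero_mul]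
  rw [sum_comm]
  simp

lemma empDist_eq_smul_visitCount : empDist X 0 T = (T : ℝ)⁻¹ • visitCount X T 0 := by
  funext y
  rw [empDist, Pi.smul_apply, smul_eq_mul, visitCount, zero_add, ← range_eq_Ico,
    natCast_card_filter, div_eq_inv_mul]
  simp only [add_zero]

/-- Sweeps `1, …, T` and `0, …, T - 1` differ only in their last and first samples. -/
lemma tvDist_visitCount_zero_le : tvDist (visitCount X T 0) (visitCount X T N) ≤ 1 := by
  have hdiff : ∀ y, visitCount X T N y - visitCount X T 0 y
      = (if X (T * N) = y then 1 else 0) - (if X 0 = y then 1 else 0) := fun y => by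
    simp only [visitCount, add_zero, ← sum_sub_distrib]
    simpa only [add_mul, one_mul, zero_mul] using
      sum_range_sub (fun k => if X (k * N) = y then (1 : ℝ) else 0) T
  unfold tvDist
  rw [div_le_one two_pos]
  calc ∑ y, |visitCount X T 0 y - visitCount X T N y|
      ≤ ∑ y, ((if X 0 = y then 1 else 0) + (if X (T * N) = y then 1 else 0)) := by
        refine sum_le_sum fun y _ => ?_
        rw [abs_sub_comm, hdiff]
        split_ifs <;> norm_num
    _ = 2 := by simp [sum_add_distrib]; norm_num

variable (hN : 0 < N)

lemma visitCount_succ_eq_empNum (j : Fin N) (y : GState N) :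
    visitCount X T (j + 1) y = empNum hN X 0 T (j + 1) y (y j) := by
  simp only [visitCount, empNum, natCast_card_filter, scanVar_succ, zero_add, range_eq_Ico]
  refine sum_congr rfl fun k _ => if_congr ⟨fun h => h ▸ ⟨fun _ _ => rfl, rfl⟩,
    fun ⟨h, hj⟩ => funext fun i => ?_⟩ rfl rfl
  by_cases hi : i = j
  · exact hi ▸ hj
  · exact h i hi

lemma vecMul_stepKernel_visitCount_apply (π : GState N → ℝ) (j : Fin N) (y : GState N) :
    (visitCount X T j ᵥ* stepKernel π j) y = condProb π j y (y j) * empDen hN X 0 T (j + 1) y := by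
  rw [vecMul_visitCount_apply, empDen_eq, natCast_card_filter, mul_sum]
  refine sum_congr rfl fun k _ => ?_
  rw [stepKernel]
  split_ifs with h
  · rw [condProb_congr π h, mul_one]
  · rw [mul_zero]

end VisitCount

namespace HerdedGibbs

open Function

variable {N : ℕ} {hN : 0 < N} {π : GState N → ℝ} (hg : HerdedGibbs N hN π)

lemma W_eq_of_forall_scanVar_ne {a b : ℕ} (hab : a ≤ b) {j : Fin N}
    (h : ∀ u, a < u → u ≤ b → scanVar N hN u ≠ j) (y : GState N) : hg.W b j y = hg.W a j y := by
  induction b, hab using Nat.le_induction with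
  | base => rfl
  | succ b hab ih =>
    rw [hg.w_frozen b j y fun hj => h (b + 1) (by omega) le_rfl hj.1.symm]
    exact ih fun u hu hu' => h u hu (by omega)

lemma W_self_eq_W_zero (j : Fin N) (y : GState N) : hg.W j j y = hg.W 0 j y :=
  hg.W_eq_of_forall_scanVar_ne (Nat.zero_le _) (fun _ hu hu' => scanVar_ne_of_pos_of_le hN hu hu') y

lemma W_succ_mul_add (k : ℕ) (j : Fin N) (y : GState N) :
    hg.W ((k + 1) * N + j) j y = hg.W (k * N + j + 1) j y :=
  hg.W_eq_of_forall_scanVar_ne (by nlinarith) (fun _ hu hu' => scanVar_ne_of_mem_Ioc hN hu hu') y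

lemma X_succ_eq_update (t : ℕ) :
    hg.X (t + 1) = update (hg.X t) (scanVar N hN (t + 1)) (hg.X (t + 1) (scanVar N hN (t + 1))) :=
  eq_update_of_agreeOff fun i hi => hg.step_other t i hi

lemma empNum_eq (T : ℕ) (j : Fin N) (x : GState N) (b : Bool) :
    empNum hN hg.X 0 T (j + 1) x b
      = #{k ∈ range T | (∀ i, i ≠ j → hg.X (k * N + j) i = x i) ∧ hg.X (k * N + j + 1) j = b} := by
  simp only [empNum, zero_add, scanVar_succ, range_eq_Ico, ← add_assoc]
  refine congrArg card <| filter_congr fun k _ =>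
    and_congr_left fun _ => forall₂_congr fun i hi => ?_
  rw [hg.step_other (k * N + j) i (by rwa [scanVar_mul_add_succ])]

lemma empNum_true_add_false (T : ℕ) (j : Fin N) (x : GState N) :
    empNum hN hg.X 0 T (j + 1) x true + empNum hN hg.X 0 T (j + 1) x false
      = empDen hN hg.X 0 T (j + 1) x := by
  simp only [empNum_eq, empDen_eq, ← filter_filter, Bool.eq_false_iff, ne_eq]
  exact card_filter_add_card_filter_not _

lemma W_succ_mul_add_update (j : Fin N) (x : GState N) (b : Bool) (k : ℕ) :
    hg.W ((k + 1) * N + j) j (update x j b) = hg.W (k * N + j) j (update x j b)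
      + if ∀ i, i ≠ j → hg.X (k * N + j) i = x i then
          condProb π j x true - (if hg.X (k * N + j + 1) j = true then 1 else 0)
        else 0 := by
  have hs := scanVar_mul_add_succ hN k j
  rw [hg.W_succ_mul_add]
  by_cases hA : ∀ i, i ≠ j → hg.X (k * N + j) i = x i
  · have := hg.w_active (k * N + j) (update x j b) fun i hi => by
      rw [hs] at hi
      rw [update_of_ne hi, hA i hi]
    rw [hs, condProb_update] at this
    rw [this, if_pos hA, add_sub_assoc]
  · rw [if_neg hA, add_zero]
    refine hg.w_frozen _ _ _ fun ⟨_, h⟩ => hA fun i hi => ?_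
    simpa [update_of_ne hi] using (h i hi).symm

lemma W_mul_add_update_true_sub_false (j : Fin N) (x : GState N) (k : ℕ) :
    hg.W (k * N + j) j (update x j true) - hg.W (k * N + j) j (update x j false)
      = hg.W 0 j (update x j true) - hg.W 0 j (update x j false) := by
  induction k with
  | zero => simp only [zero_mul, zero_add, W_self_eq_W_zero]
  | succ k ih => rw [W_succ_mul_add_update, W_succ_mul_add_update, ← ih]; ring

lemma X_mul_add_succ_eq_true_iff {j : Fin N} {x : GState N} {k : ℕ}
    (hA : ∀ i, i ≠ j → hg.X (k * N + j) i = x i) :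
    hg.X (k * N + j + 1) j = true ↔ 0 < hg.W (k * N + j) j (update x j (hg.X (k * N + j) j)) := by
  have := hg.step_cur (k * N + j)
  rw [scanVar_mul_add_succ] at this
  rw [this, decide_eq_true_iff, ← eq_update_of_agreeOff hA]

variable (hπ0 : ∀ x, 0 ≤ π x)
include hπ0

lemma W_succ_mem_Icc (t : ℕ) (j : Fin N) (x : GState N) :
    hg.W (t + 1) j x ∈
      Set.Icc (hg.W t j x + condProb π j x true - 1) (hg.W t j x + condProb π j x true) := by
  have hp0 := condProb_nonneg hπ0 j x true
  have hp1 := condProb_le_one hπ0 j x true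
  by_cases h : j = scanVar N hN (t + 1) ∧ ∀ i, i ≠ j → x i = hg.X t i
  · obtain ⟨rfl, hx⟩ := h
    rw [hg.w_active t x hx]
    constructor <;> split_ifs <;> linarith
  · rw [hg.w_frozen t j x h]
    constructor <;> linarith

lemma W_nonpos_of_condProb_eq_zero {j : Fin N} {x : GState N} (hp : condProb π j x true = 0)
    (t : ℕ) : hg.W t j x ≤ 0 := by
  have hanti : Antitone fun t => hg.W t j x := antitone_nat_of_succ_le fun t => by
    simpa [hp] using (hg.W_succ_mem_Icc hπ0 t j x).2
  exact (hanti (Nat.zero_le t)).trans (hp ▸ (hg.init_w j x).2)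

lemma W_pos_of_condProb_eq_one {j : Fin N} {x : GState N} (hp : condProb π j x true = 1)
    (t : ℕ) : 0 < hg.W t j x := by
  have hmono : Monotone fun t => hg.W t j x := monotone_nat_of_le_succ fun t => by
    simpa [hp] using (hg.W_succ_mem_Icc hπ0 t j x).1
  have h0 := (hg.init_w j x).1
  rw [hp, sub_self] at h0
  exact h0.trans_le (hmono (Nat.zero_le t))

/-- Herding never emits a value of zero conditional probability. -/
lemma pi_X_pos (t : ℕ) : 0 < π (hg.X t) := by
  induction t with
  | zero => exact hg.init_support
  | succ t ih =>
    set j := scanVar N hN (t + 1)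
    set b := hg.X (t + 1) j
    have hemit : b = decide (0 < hg.W t j (hg.X t)) := hg.step_cur t
    have hcond : condProb π j (hg.X t) b ≠ 0 := by
      intro hzero
      cases hbv : b <;> rw [hbv] at hzero hemit
      · have hp1 : condProb π j (hg.X t) true = 1 := by
          linarith [condProb_true_add_false hπ0 (j := j) ih]
        exact absurd (hg.W_pos_of_condProb_eq_one hπ0 hp1 t) (by simpa using hemit.symm)
      · exact absurd (hg.W_nonpos_of_condProb_eq_zero hπ0 hzero t)
          (by simpa using hemit.symm)
    rw [hg.X_succ_eq_update t]
    refine (hπ0 _).lt_of_ne fun h => hcond ?_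
    rw [condProb, ← h, zero_div]

/-- The two weights of the class of `x` move in lockstep, offset by `d` with `|d| < 1`; the
emission is decided by the weight of the current state, i.e. by comparing the first weight
with the threshold `0` or `d`. -/
lemma abs_empNum_true_sub_mul_empDen_le (T : ℕ) (j : Fin N) (x : GState N) :
    |(empNum hN hg.X 0 T (j + 1) x true : ℝ)
      - condProb π j x true * empDen hN hg.X 0 T (j + 1) x| ≤ 2 := by
  set p := condProb π j x true
  set d := hg.W 0 j (update x j true) - hg.W 0 j (update x j false)
  have hinit := fun b => condProb_update π j x b true ▸ hg.init_w j (update x j b)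
  have hd : |d| < 1 := abs_lt.mpr ⟨by linarith [hinit true, hinit false],
    by linarith [hinit true, hinit false]⟩
  have hherd := abs_card_filter_sub_mul_card_filter_le (m := min d 0) (M := max d 0)
    (u := fun k => hg.W (k * N + j) j (update x j true))
    (θ := fun k => if hg.X (k * N + j) j then 0 else d)
    (condProb_nonneg hπ0 j x true) (condProb_le_one hπ0 j x true) (min_le_right _ _)
    (le_max_right _ _) (fun k => by split_ifs <;> simp)
    (fun k hA => by
      rw [hg.X_mul_add_succ_eq_true_iff hA]
      cases hβ : hg.X (k * N + j) j
      · have := hg.W_mul_add_update_true_sub_false j x k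
        simp only [Bool.false_eq_true, if_false]
        constructor <;> intro <;> linarith
      · simp)
    (by simpa [W_self_eq_W_zero] using hinit true) (hg.W_succ_mul_add_update j x true) T
  rw [empNum_eq, empDen_eq]
  refine hherd.trans ?_
  rw [max_sub_min_eq_abs', sub_zero]
  linarith

lemma abs_empNum_sub_mul_empDen_le (T : ℕ) (j : Fin N) (x : GState N) (b : Bool) :
    |(empNum hN hg.X 0 T (j + 1) x b : ℝ)
      - condProb π j x b * empDen hN hg.X 0 T (j + 1) x| ≤ 2 := by
  cases b
  · have hsplit := hg.empNum_true_add_false T j x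
    rcases Nat.eq_zero_or_pos (empDen hN hg.X 0 T (j + 1) x) with h0 | hpos
    · simp [show empNum hN hg.X 0 T (j + 1) x false = 0 by omega, h0]
    · obtain ⟨k, hk⟩ := card_pos.mp (empDen_eq hN hg.X T j x ▸ hpos)
      have hA := (mem_filter.mp hk).2
      have hsum := condProb_true_add_false hπ0 (j := j) (hg.pi_X_pos hπ0 (k * N + j))
      simp only [condProb_congr π hA] at hsum
      have hnum : (empNum hN hg.X 0 T (j + 1) x false : ℝ)
          = empDen hN hg.X 0 T (j + 1) x - empNum hN hg.X 0 T (j + 1) x true := by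
        rw [← hsplit]
        push_cast
        ring
      rw [hnum, show condProb π j x false = 1 - condProb π j x true by linarith, ← abs_neg]
      convert hg.abs_empNum_true_sub_mul_empDen_le hπ0 T j x using 2
      ring
  · exact hg.abs_empNum_true_sub_mul_empDen_le hπ0 T j x

lemma tvDist_visitCount_succ_le (T : ℕ) (j : Fin N) :
    tvDist (visitCount hg.X T (j + 1)) (visitCount hg.X T j ᵥ* stepKernel π j)
      ≤ Fintype.card (GState N) := by
  unfold tvDist
  rw [div_le_iff₀ two_pos]
  calc ∑ y, |visitCount hg.X T (j + 1) y - (visitCount hg.X T j ᵥ* stepKernel π j) y|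
      ≤ ∑ _y : GState N, (2 : ℝ) := sum_le_sum fun y _ => by
        rw [visitCount_succ_eq_empNum _ _ hN, vecMul_stepKernel_visitCount_apply _ _ hN]
        exact hg.abs_empNum_sub_mul_empDen_le hπ0 T j y (y j)
    _ = Fintype.card (GState N) * 2 := by simp [mul_comm]

lemma tvDist_visitCount_sweep_le (T : ℕ) :
    tvDist (visitCount hg.X T N) (visitCount hg.X T 0 ᵥ* sweepKernel π)
      ≤ N * Fintype.card (GState N) :=
  tvDist_vecMul_prod_ofFn_le (stepKernel_nonneg hπ0) (sum_stepKernel_le_one hπ0)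
    (visitCount hg.X T) (hg.tvDist_visitCount_succ_le hπ0 T)

theorem tvDist_empDist_le (hπ1 : ∑ x, π x = 1) (hη : dobrushin (sweepKernel π) < 1) {T : ℕ}
    (hT : 0 < T) :
    tvDist (empDist hg.X 0 T) π
      ≤ (N * Fintype.card (GState N) + 1) / (1 - dobrushin (sweepKernel π)) / T := by
  set c := visitCount hg.X T 0
  have hTR : (0 : ℝ) < T := Nat.cast_pos.mpr hT
  have hstat : ((T : ℝ) • π) ᵥ* sweepKernel π = (T : ℝ) • π := by
    rw [smul_vecMul, vecMul_sweepKernel hπ0]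
  have hmass : ∑ y, c y = ∑ y, ((T : ℝ) • π) y := by
    simp [c, sum_visitCount, ← mul_sum, hπ1]
  have hinvariant : tvDist c (c ᵥ* sweepKernel π) ≤ N * Fintype.card (GState N) + 1 := by
    linarith [tvDist_triangle c (visitCount hg.X T N) (c ᵥ* sweepKernel π),
      tvDist_visitCount_zero_le hg.X T, hg.tvDist_visitCount_sweep_le hπ0 T]
  have hscale := tvDist_smul (T : ℝ)⁻¹ c ((T : ℝ) • π)
  rw [inv_smul_smul₀ hTR.ne', abs_of_pos (inv_pos.mpr hTR)] at hscale
  rw [empDist_eq_smul_visitCount, hscale, div_eq_inv_mul _ (T : ℝ)]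
  gcongr
  exact (tvDist_le_of_vecMul_eq_self hη hstat hmass).trans
    (div_le_div_of_nonneg_right hinvariant (by linarith))

end HerdedGibbs

/-- Corollary: O(log T / T) convergence without burn-in: under the
hypotheses of the main theorem, collecting samples from the very beginning (τ = 0) gives
d_v(P_T⁽⁰⁾ − π) ≤ (λ + τ*(T))/T for all T ≥ T* + τ*(T*), where λ = 2N(1+η)/(l(1−η)),
T* = 2B/l and τ*(T) = log_{2/(1+η)}((1−η)lT/(4N)). -/
theorem herded_gibbs_logT_over_T_convergence {N : ℕ} (hN : 0 < N)
    (π : GState N → ℝ) (hπ0 : ∀ x, 0 ≤ π x) (hπ1 : ∑ x, π x = 1)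
    (hg : HerdedGibbs N hN π)
    (hη : dobrushin (sweepKernel π) < 1) :
    ∃ l B : ℝ, 0 < l ∧ 0 < B ∧
      ∀ T : ℕ,
        2 * B / l
            + Real.logb (2 / (1 + dobrushin (sweepKernel π)))
              ((1 - dobrushin (sweepKernel π)) * l * (2 * B / l) / (4 * N)) ≤ (T : ℝ) →
        tvDist (empDist hg.X 0 T) π
          ≤ (2 * (N : ℝ) * (1 + dobrushin (sweepKernel π))
                / (l * (1 - dobrushin (sweepKernel π)))
              + Real.logb (2 / (1 + dobrushin (sweepKernel π)))
                ((1 - dobrushin (sweepKernel π)) * l * (T : ℝ) / (4 * N))) / (T : ℝ) := by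
  set η := dobrushin (sweepKernel π)
  set C := (N * Fintype.card (GState N) + 1) / (1 - η)
  have hη0 : 0 ≤ η := dobrushin_nonneg _
  have hC : 0 ≤ C := div_nonneg (by positivity) (by linarith)
  have hb : 1 < 2 / (1 + η) := by rw [lt_div_iff₀ (by linarith)]; linarith
  have hNR : (0 : ℝ) < N := Nat.cast_pos.mpr hN
  have h1η : 0 < 1 - η := by linarith
  -- `l = 1` and `B` chosen so that `τ*(T*) = C`, the constant of the `O(1/T)` rate
  set B := 2 * N * (2 / (1 + η)) ^ C / (1 - η)
  have hB : 0 < B := div_pos (by positivity) h1η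
  have harg : (1 - η) * 1 * (2 * B / 1) / (4 * N) = (2 / (1 + η)) ^ C := by
    simp only [B]
    field_simp
    norm_num
  refine ⟨1, B, one_pos, hB, fun T hT => ?_⟩
  rw [harg, Real.logb_rpow (by linarith) hb.ne', div_one] at hT
  have hT0 : 0 < T := Nat.cast_pos.mp (by linarith : (0 : ℝ) < T)
  have hCle : C ≤ Real.logb (2 / (1 + η)) ((1 - η) * 1 * T / (4 * N)) := by
    rw [Real.le_logb_iff_rpow_le hb (by positivity), ← harg]
    gcongr
    linarith
  calc tvDist (empDist hg.X 0 T) π ≤ C / T := hg.tvDist_empDist_le hπ0 hπ1 hη hT0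
    _ ≤ _ := by
      gcongr
      have hlam : 0 ≤ 2 * (N : ℝ) * (1 + η) / (1 * (1 - η)) :=
        div_nonneg (by positivity) (by positivity)
      linarith
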